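/- arXiv:2010.08037 — 9 statements merged into one kernel-verified Lean document; each statement's English description precedes it below -/
import Mathlib

section
/- Let f be an increasing (not necessarily continuous) function on [a,b] ⊂ ℝ and g a continuous function on [a,b]. If f(a) > g(a) and f(b) < g(b), then there exists x* ∈ (a,b) with f(x*) = g(x*). Moreover, the set {x ∈ [a,b] : f(x) = g(x)} has a maximum element x̄, and x̄ = sup{x ∈ [a,b] : f(x) ≥ g(x)}. -/
open Topology Filter


/-- intermediate-value style lemma for an increasing function vs a
continuous function on `[a,b]`, plus existence of a maximal crossing point which
equals the supremum of the set where `f ≥ g`. -/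
theorem stmt0 (a b : ℝ) (hab : a < b) (f g : ℝ → ℝ)
    (hf : MonotoneOn f (Set.Icc a b)) (hg : ContinuousOn g (Set.Icc a b))
    (ha : g a < f a) (hb : f b < g b) :
    (∃ x ∈ Set.Ioo a b, f x = g x) ∧
    ∃ xbar, IsGreatest {x | x ∈ Set.Icc a b ∧ f x = g x} xbar ∧
      xbar = sSup {x | x ∈ Set.Icc a b ∧ g x ≤ f x} := by
  set S : Set ℝ := {x | x ∈ Set.Icc a b ∧ g x ≤ f x} with hS
  have haS : a ∈ S := ⟨⟨le_refl a, hab.le⟩, ha.le⟩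
  have hne : S.Nonempty := ⟨a, haS⟩
  have hbdd : BddAbove S := ⟨b, fun x hx => hx.1.2⟩
  set c := sSup S with hc
  have hac : a ≤ c := le_csSup hbdd haS
  have hcb : c ≤ b := csSup_le hne fun x hx => hx.1.2
  have hcI : c ∈ Set.Icc a b := ⟨hac, hcb⟩
  have hclos : c ∈ closure S := csSup_mem_closure hne hbdd
  have hgcont : ContinuousWithinAt g (Set.Icc a b) c := hg c hcI
  have h1 : g c ≤ f c := by
    have hne' : (𝓝[S] c).NeBot := mem_closure_iff_nhdsWithin_neBot.mp hclos
    have htg : Filter.Tendsto g (𝓝[S] c) (𝓝 (g c)) :=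
      hgcont.mono (fun x hx => hx.1)
    refine le_of_tendsto htg ?_
    filter_upwards [self_mem_nhdsWithin] with x hx
    exact hx.2.trans (hf hx.1 hcI (le_csSup hbdd hx))
  have hclt : c < b :=
    lt_of_le_of_ne hcb (fun h => absurd (h ▸ h1) (not_le.mpr hb))
  have h2 : f c ≤ g c := by
    have hsub : Set.Ioo c b ⊆ Set.Icc a b := fun x hx => ⟨hac.trans hx.1.le, hx.2.le⟩
    have hcl : c ∈ closure (Set.Ioo c b) := by
      rw [closure_Ioo hclt.ne]; exact ⟨le_refl c, hclt.le⟩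
    have hne' : (𝓝[Set.Ioo c b] c).NeBot := mem_closure_iff_nhdsWithin_neBot.mp hcl
    have htg : Filter.Tendsto g (𝓝[Set.Ioo c b] c) (𝓝 (g c)) := hgcont.mono hsub
    refine ge_of_tendsto htg ?_
    filter_upwards [self_mem_nhdsWithin] with x hx
    have hxS : x ∉ S := fun hxS => absurd (le_csSup hbdd hxS) (not_le.mpr hx.1)
    have hfg : f x < g x := by
      by_contra h
      exact hxS ⟨hsub hx, not_lt.mp h⟩
    exact le_of_lt (lt_of_le_of_lt (hf hcI (hsub hx) hx.1.le) hfg)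
  have heq : f c = g c := le_antisymm h2 h1
  have halt : a < c := by
    rcases lt_or_eq_of_le hac with h | h
    · exact h
    · rw [← h] at heq; exact absurd heq.symm (ne_of_lt ha)
  refine ⟨⟨c, ⟨halt, hclt⟩, heq⟩, c, ⟨⟨hcI, heq⟩, fun x hx => le_csSup hbdd ⟨hx.1, hx.2.ge⟩⟩, rfl⟩
end

section
/- Let G be a CDF on [θ̲, θ̄] and φ_d > 0. Suppose that for all τ' ≥ τ (with τ ≥ θ̲), φ_d · G(τ') ≤ ∫_{θ̲}^{τ'} G(s) ds. Then for any τ ≤ τ_a ≤ τ_b, ∫_{θ̲}^{τ_b} G(s) ds ≤ e^{(τ_b − τ_a)/φ_d} · ∫_{θ̲}^{τ_a} G(s) ds. -/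
open intervalIntegral Filter Real

/-- exponential growth bound on the integral of a CDF under the
weak-highest-equilibrium constraint `φd · G(τ') ≤ ∫_{θl}^{τ'} G` for all `τ' ≥ τ`. -/
theorem stmt2 (θl θu φd τ : ℝ) (G : ℝ → ℝ)
    (hmono : Monotone G) (hG0 : ∀ s, 0 ≤ G s) (hG1 : ∀ s, G s ≤ 1)
    (hφ : 0 < φd) (hτ : θl ≤ τ)
    (hHE : ∀ τ', τ ≤ τ' → φd * G τ' ≤ ∫ s in θl..τ', G s) :
    ∀ τa τb, τ ≤ τa → τa ≤ τb →
      (∫ s in θl..τb, G s) ≤ Real.exp ((τb - τa) / φd) * ∫ s in θl..τa, G s := by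
  intro τa τb hτa hab
  set F : ℝ → ℝ := fun t => ∫ s in θl..t, G s with hF
  have hint : ∀ a b : ℝ, IntervalIntegrable G MeasureTheory.volume a b := fun a b =>
    hmono.intervalIntegrable
  -- key one-step inequality
  have step : ∀ a b : ℝ, τ ≤ a → a ≤ b → (1 - (b - a) / φd) * F b ≤ F a := by
    intro a b ha hab'
    have hdiff : F b - F a = ∫ s in a..b, G s := by
      rw [hF]
      simp only
      rw [intervalIntegral.integral_interval_sub_left (hint θl b) (hint θl a)]
    have h1 : (∫ s in a..b, G s) ≤ (b - a) * G b := by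
      have : (∫ s in a..b, G s) ≤ ∫ s in a..b, G b := by
        apply intervalIntegral.integral_mono_on hab' (hint a b)
          (intervalIntegrable_const)
        intro x hx
        exact hmono hx.2
      simpa using this.trans_eq (by simp [mul_comm])
    have h2 : φd * G b ≤ F b := hHE b (ha.trans hab')
    have hGb : G b ≤ F b / φd := (le_div_iff₀ hφ).mpr (by linarith [h2, mul_comm φd (G b)])
    have h3 : F b - F a ≤ (b - a) * (F b / φd) := by
      rw [hdiff] at *
      calc (∫ s in a..b, G s) ≤ (b - a) * G b := h1
        _ ≤ (b - a) * (F b / φd) := by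
            apply mul_le_mul_of_nonneg_left hGb (by linarith)
    have : (1 - (b - a) / φd) * F b = F b - (b - a) * (F b / φd) := by ring
    linarith
  have hFa_nonneg : 0 ≤ F τa := by
    apply intervalIntegral.integral_nonneg (hτ.trans hτa)
    intro x _; exact hG0 x
  set δ := τb - τa with hδ
  have hδ0 : 0 ≤ δ := by linarith
  -- per-n bound
  have perN : ∀ n : ℕ, 0 < n → δ / (n * φd) < 1 →
      F τb ≤ ((1 - δ / (n * φd)) ^ n)⁻¹ * F τa := by
    intro n hn hx
    set x := δ / (n * φd) with hxdef
    have hx0 : 0 ≤ x := div_nonneg hδ0 (by positivity)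
    have h1x : 0 < 1 - x := by linarith
    have key : ∀ k : ℕ, k ≤ n → (1 - x) ^ k * F (τa + k * (δ / n)) ≤ F τa := by
      intro k hk
      induction k with
      | zero => simp
      | succ k ih =>
        have hk' : k ≤ n := Nat.le_of_succ_le hk
        have ihk := ih hk'
        have hkpos : (0:ℝ) ≤ (k : ℝ) * (δ / n) := by positivity
        have ha : τ ≤ τa + k * (δ / n) := by linarith
        have hstep := step (τa + k * (δ / n)) (τa + (k + 1 : ℕ) * (δ / n)) ha
          (by push_cast; nlinarith [div_nonneg hδ0 (le_of_lt (by exact_mod_cast hn : (0:ℝ) < n))])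
        have hgap : ((τa + (k + 1 : ℕ) * (δ / n)) - (τa + k * (δ / n))) / φd = x := by
          push_cast
          rw [hxdef]
          field_simp
          ring
        rw [hgap] at hstep
        calc (1 - x) ^ (k + 1) * F (τa + (k + 1 : ℕ) * (δ / n))
            = (1 - x) ^ k * ((1 - x) * F (τa + (k + 1 : ℕ) * (δ / n))) := by ring
          _ ≤ (1 - x) ^ k * F (τa + k * (δ / n)) := by
              apply mul_le_mul_of_nonneg_left hstep (by positivity)
          _ ≤ F τa := ihk
    have hend : τa + (n : ℝ) * (δ / n) = τb := by
      have hn' : (n : ℝ) ≠ 0 := by exact_mod_cast hn.ne'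
      field_simp
      linarith
    have := key n le_rfl
    rw [hend] at this
    rw [inv_mul_eq_div, le_div_iff₀' (by positivity)]
    exact this
  -- take the limit
  have hlim : Tendsto (fun n : ℕ => ((1 - δ / (n * φd)) ^ n)⁻¹ * F τa) atTop
      (nhds (Real.exp (δ / φd) * F τa)) := by
    have h1 : Tendsto (fun n : ℕ => (1 + (-(δ / φd)) / n) ^ n) atTop
        (nhds (Real.exp (-(δ / φd)))) := Real.tendsto_one_add_div_pow_exp (-(δ / φd))
    have heq : (fun n : ℕ => (1 + (-(δ / φd)) / n) ^ n)
        = fun n : ℕ => (1 - δ / (n * φd)) ^ n := by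
      funext n
      congr 1
      rw [neg_div, ← sub_eq_add_neg, div_div]
      ring_nf
    rw [heq] at h1
    have h2 : Tendsto (fun n : ℕ => ((1 - δ / (n * φd)) ^ n)⁻¹) atTop
        (nhds (Real.exp (-(δ / φd)))⁻¹) := h1.inv₀ (Real.exp_ne_zero _)
    rw [← Real.exp_neg, neg_neg] at h2
    exact h2.mul_const _
  have hev : ∀ᶠ n : ℕ in atTop, F τb ≤ ((1 - δ / (n * φd)) ^ n)⁻¹ * F τa := by
    have htend : Tendsto (fun n : ℕ => δ / (n * φd)) atTop (nhds 0) := by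
      have : Tendsto (fun n : ℕ => (n : ℝ) * φd) atTop atTop :=
        Tendsto.atTop_mul_const hφ tendsto_natCast_atTop_atTop
      simpa using Tendsto.div_atTop tendsto_const_nhds this
    have hlt : ∀ᶠ n : ℕ in atTop, δ / (n * φd) < 1 :=
      htend.eventually (eventually_lt_nhds zero_lt_one)
    filter_upwards [hlt, eventually_gt_atTop 0] with n h1 h2
    exact perN n h2 h1
  have := ge_of_tendsto hlim hev
  simpa [hδ] using this
end

section
/- Fix real numbers θ̲ < θ̄ and μ ∈ (θ̲, θ̄). Define G*(s) = e^{(θ̲−μ)/(θ̄−μ)} for s ∈ [θ̲, θ̲+θ̄−μ) and G*(s) = e^{(s−θ̄)/(θ̄−μ)} for s ∈ [θ̲+θ̄−μ, θ̄]. Then G* is a CDF on [θ̲, θ̄] with mean exactly μ, i.e., ∫_{θ̲}^{θ̄} s dG*(s) = μ. -/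
/-- the step-exponential function `G*` is a CDF on `[θl, θu]`
(monotone, with `G*(θu) = 1`) whose mean `θu − ∫ G*` is exactly `μ`. -/
theorem stmt6 (θl θu μ : ℝ) (h1 : θl < μ) (h2 : μ < θu)
    (Gstar : ℝ → ℝ)
    (hdef1 : ∀ s ∈ Set.Ico θl (θl + θu - μ), Gstar s = Real.exp ((θl - μ) / (θu - μ)))
    (hdef2 : ∀ s ∈ Set.Icc (θl + θu - μ) θu, Gstar s = Real.exp ((s - θu) / (θu - μ))) :
    MonotoneOn Gstar (Set.Icc θl θu) ∧ Gstar θu = 1 ∧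
      θu - (∫ s in θl..θu, Gstar s) = μ := by
  have hc : (0:ℝ) < θu - μ := by linarith
  set m := θl + θu - μ with hm
  have hmlt : θl < m := by simp only [hm]; linarith
  have hmle : m ≤ θu := by simp only [hm]; linarith
  -- Gstar equals the constant on the closed interval [θl, m]
  have hval : ∀ s ∈ Set.Icc θl m, Gstar s = Real.exp ((θl - μ) / (θu - μ)) := by
    intro s hs
    rcases lt_or_eq_of_le hs.2 with h | h
    · exact hdef1 s ⟨hs.1, h⟩
    · rw [hdef2 s ⟨le_of_eq h.symm, by linarith [hs.2]⟩, h]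
      congr 1
      rw [hm]; ring_nf
  have hmono : MonotoneOn Gstar (Set.Icc θl θu) := by
    intro x hx y hy hxy
    rcases le_or_gt m x with hxm | hxm
    · rw [hdef2 x ⟨hxm, hx.2⟩, hdef2 y ⟨le_trans hxm hxy, hy.2⟩]
      exact Real.exp_le_exp.mpr (by apply div_le_div_of_nonneg_right _ hc.le; linarith)
    · rw [hval x ⟨hx.1, le_of_lt hxm⟩]
      rcases le_or_gt m y with hym | hym
      · rw [hdef2 y ⟨hym, hy.2⟩]
        refine Real.exp_le_exp.mpr ?_
        apply div_le_div_of_nonneg_right _ hc.le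
        simp only [hm] at hym; linarith
      · rw [hval y ⟨hy.1, le_of_lt hym⟩]
  refine ⟨hmono, ?_, ?_⟩
  · rw [hdef2 θu ⟨hmle, le_refl _⟩]
    simp
  · -- the integral
    have hle : θl ≤ θu := by linarith
    have hint : ∀ a b, a ∈ Set.Icc θl θu → b ∈ Set.Icc θl θu →
        IntervalIntegrable Gstar MeasureTheory.volume a b := by
      intro a b ha hb
      apply MonotoneOn.intervalIntegrable
      exact hmono.mono (Set.uIcc_subset_Icc ha hb)
    have hsplit : (∫ s in θl..θu, Gstar s) =
        (∫ s in θl..m, Gstar s) + (∫ s in m..θu, Gstar s) := by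
      rw [intervalIntegral.integral_add_adjacent_intervals
        (hint θl m ⟨le_refl _, hle⟩ ⟨hmlt.le, hmle⟩)
        (hint m θu ⟨hmlt.le, hmle⟩ ⟨hle, le_refl _⟩)]
    have h1' : (∫ s in θl..m, Gstar s) = (m - θl) * Real.exp ((θl - μ) / (θu - μ)) := by
      rw [intervalIntegral.integral_congr (g := fun _ => Real.exp ((θl - μ) / (θu - μ)))]
      · simp [smul_eq_mul]
      · intro s hs
        rw [Set.uIcc_of_le hmlt.le] at hs
        exact hval s hs
    have hF : ∀ s : ℝ, HasDerivAt (fun t => (θu - μ) * Real.exp ((t - θu) / (θu - μ)))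
        (Real.exp ((s - θu) / (θu - μ))) s := by
      intro s
      have hd : HasDerivAt (fun t : ℝ => (t - θu) / (θu - μ)) (1 / (θu - μ)) s := by
        simpa using ((hasDerivAt_id s).sub_const θu).div_const (θu - μ)
      have h := (Real.hasDerivAt_exp ((s - θu) / (θu - μ))).comp s hd
      have h' := h.const_mul (θu - μ)
      convert h' using 1
      case e'_9 => rw [one_div, mul_comm (Real.exp _), ← mul_assoc, mul_inv_cancel₀ hc.ne', one_mul]
      all_goals rfl
    have h2' : (∫ s in m..θu, Gstar s) =
        (θu - μ) * (1 - Real.exp ((θl - μ) / (θu - μ))) := by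
      rw [intervalIntegral.integral_congr (g := fun s => Real.exp ((s - θu) / (θu - μ)))
        (by intro s hs; rw [Set.uIcc_of_le hmle] at hs; exact hdef2 s hs)]
      rw [intervalIntegral.integral_eq_sub_of_hasDerivAt (fun s _ => hF s)
        (Continuous.intervalIntegrable (by continuity) m θu)]
      have hme : m - θu = θl - μ := by rw [hm]; ring
      rw [hme]
      simp [mul_sub]
    rw [hsplit, h1', h2']
    have : m - θl = θu - μ := by rw [hm]; ring
    rw [this]
    ring
end

section
/- With G* defined as G*(s) = e^{(θ̲−μ)/(θ̄−μ)} on [θ̲, θ̲+θ̄−μ) and G*(s) = e^{(s−θ̄)/(θ̄−μ)} on [θ̲+θ̄−μ, θ̄], set φ_d = θ̄ − μ. Then for every τ' ∈ [θ̲+θ̄−μ, θ̄], E_{G*}[s | s ≤ τ'] = τ' − φ_d. -/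
/-- for the step-exponential `G*` and `φd = θ̄ − μ`, the conditional mean
`E[s | s ≤ τ'] = τ' − (∫_{θl}^{τ'} G*)/G*(τ')` equals `τ' − φd` on `[θl+θu−μ, θu]`. -/
theorem stmt7 (θl θu μ : ℝ) (h1 : θl < μ) (h2 : μ < θu)
    (Gstar : ℝ → ℝ)
    (hdef1 : ∀ s ∈ Set.Ico θl (θl + θu - μ), Gstar s = Real.exp ((θl - μ) / (θu - μ)))
    (hdef2 : ∀ s ∈ Set.Icc (θl + θu - μ) θu, Gstar s = Real.exp ((s - θu) / (θu - μ))) :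
    ∀ τ' ∈ Set.Icc (θl + θu - μ) θu,
      τ' - (∫ s in θl..τ', Gstar s) / Gstar τ' = τ' - (θu - μ) := by
  intro τ' hτ
  obtain ⟨hτ1, hτ2⟩ := hτ
  set k := θu - μ with hk
  have hkpos : 0 < k := by simp only [hk]; linarith
  set c := θl + θu - μ with hc
  have hθlc : θl ≤ c := by simp only [hc]; linarith
  have hcθu : c ≤ θu := by simp only [hc]; linarith
  have hG1 : ∀ s ∈ Set.Icc θl c, Gstar s = Real.exp ((θl - μ) / k) := by
    intro s hs
    rcases eq_or_lt_of_le hs.2 with h | h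
    · rw [h, hdef2 c ⟨le_refl _, hcθu⟩]
      congr 1
      simp only [hc, hk]; ring
    · exact hdef1 s ⟨hs.1, h⟩
  have hG2 : ∀ s ∈ Set.Icc c τ', Gstar s = Real.exp ((s - θu) / k) := by
    intro s hs
    exact hdef2 s ⟨hs.1, le_trans hs.2 hτ2⟩
  -- first piece
  have hI1 : (∫ s in θl..c, Gstar s) = k * Real.exp ((θl - μ) / k) := by
    rw [intervalIntegral.integral_congr (g := fun _ => Real.exp ((θl - μ) / k))
        (by intro s hs; rw [Set.uIcc_of_le hθlc] at hs; exact hG1 s hs)]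
    rw [intervalIntegral.integral_const]
    have : c - θl = k := by simp only [hc, hk]; ring
    rw [this, smul_eq_mul]
  -- second piece
  have hderiv : ∀ s : ℝ, HasDerivAt (fun t => k * Real.exp ((t - θu) / k))
      (Real.exp ((s - θu) / k)) s := by
    intro s
    have h : HasDerivAt (fun t => (t - θu) / k) (1 / k) s := by
      simpa using (((hasDerivAt_id s).sub_const θu).div_const k)
    have := (h.exp).const_mul k
    rw [show k * (Real.exp ((s - θu) / k) * (1 / k)) = Real.exp ((s - θu) / k) by
      rw [mul_comm k, mul_assoc, one_div_mul_cancel hkpos.ne', mul_one]] at this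
    exact this
  have hcont : Continuous fun s : ℝ => Real.exp ((s - θu) / k) := by
    continuity
  have hI2 : (∫ s in c..τ', Gstar s)
      = k * Real.exp ((τ' - θu) / k) - k * Real.exp ((c - θu) / k) := by
    rw [intervalIntegral.integral_congr (g := fun s => Real.exp ((s - θu) / k))
        (by intro s hs; rw [Set.uIcc_of_le hτ1] at hs; exact hG2 s hs)]
    exact intervalIntegral.integral_eq_sub_of_hasDerivAt (fun s _ => hderiv s)
      (hcont.intervalIntegrable _ _)
  -- integrability of the two pieces
  have hint1 : IntervalIntegrable Gstar MeasureTheory.volume θl c := by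
    refine (intervalIntegrable_const (c := Real.exp ((θl - μ) / k))).congr ?_
    · intro s hs
      rw [Set.uIoc_of_le hθlc] at hs
      exact (hG1 s ⟨le_of_lt hs.1, hs.2⟩).symm
  have hint2 : IntervalIntegrable Gstar MeasureTheory.volume c τ' := by
    refine (hcont.intervalIntegrable c τ').congr ?_
    · intro s hs
      rw [Set.uIoc_of_le hτ1] at hs
      exact (hG2 s ⟨le_of_lt hs.1, hs.2⟩).symm
  have hsplit : (∫ s in θl..τ', Gstar s) = (∫ s in θl..c, Gstar s) + ∫ s in c..τ', Gstar s :=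
    (intervalIntegral.integral_add_adjacent_intervals hint1 hint2).symm
  have hcθ : c - θu = θl - μ := by simp only [hc]; ring
  have hGτ : Gstar τ' = Real.exp ((τ' - θu) / k) := hdef2 τ' ⟨hτ1, hτ2⟩
  have htot : (∫ s in θl..τ', Gstar s) = k * Gstar τ' := by
    rw [hsplit, hI1, hI2, hcθ, hGτ]; ring
  rw [htot, hGτ]
  have hne : Real.exp ((τ' - θu) / k) ≠ 0 := Real.exp_ne_zero _
  rw [mul_div_assoc, div_self hne, mul_one]
end

section
/- Let G be a CDF on [θ̲, θ̄], φ_d ≥ 0, and let s̲ be the infimum of the support of G. Define a(τ) = E_G[s | s ≤ τ] and b(τ) = τ − φ_d for τ ≥ s̲. Then the set {τ ≥ s̲ : a(τ) = b(τ)} is nonempty and has a maximal element. -/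
open MeasureTheory

/-- The conditional mean `E[s | s ≤ τ]` of a measure `P`, with the convention that it
equals `τ` when the conditioning event has measure zero. -/
noncomputable def condMean (P : Measure ℝ) (τ : ℝ) : ℝ :=
  if P (Set.Iic τ) = 0 then τ else (∫ x in Set.Iic τ, x ∂P) / (P (Set.Iic τ)).toReal

open Set in
lemma condMean_aux_int (θl θu : ℝ) (P : Measure ℝ) [IsProbabilityMeasure P]
    (hsupp : P (Set.Icc θl θu)ᶜ = 0) : Integrable (fun x : ℝ => x) P := by
  have hae : ∀ᵐ x ∂P, x ∈ Icc θl θu := ae_iff.mpr hsupp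
  refine Integrable.mono' (integrable_const (max |θl| |θu|))
    measurable_id.aestronglyMeasurable ?_
  filter_upwards [hae] with x hx
  simpa [Real.norm_eq_abs] using abs_le_max_abs_abs hx.1 hx.2

open Set in
lemma condMean_mono (θl θu : ℝ) (P : Measure ℝ) [IsProbabilityMeasure P]
    (hsupp : P (Set.Icc θl θu)ᶜ = 0) : Monotone (condMean P) := by
  have hint : Integrable (fun x : ℝ => x) P := condMean_aux_int θl θu P hsupp
  intro τ1 τ2 h12
  unfold condMean
  by_cases h2 : P (Iic τ2) = 0
  · have h1 : P (Iic τ1) = 0 := measure_mono_null (Iic_subset_Iic.mpr h12) h2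
    rw [if_pos h1, if_pos h2]; exact h12
  · have hm2 : 0 < (P (Iic τ2)).toReal := ENNReal.toReal_pos h2 (measure_ne_top P _)
    rw [if_neg h2]
    by_cases h1 : P (Iic τ1) = 0
    · rw [if_pos h1, le_div_iff₀ hm2]
      have hae1 : ∀ᵐ x ∂(P.restrict (Iic τ2)), τ1 ≤ x := by
        refine ae_restrict_of_ae ?_
        filter_upwards [measure_eq_zero_iff_ae_notMem.mp h1] with x hx
        exact le_of_lt (lt_of_not_ge fun h => hx h)
      have hb : ∫ _ in Iic τ2, τ1 ∂P ≤ ∫ x in Iic τ2, x ∂P :=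
        integral_mono_ae (integrable_const τ1) hint.integrableOn hae1
      rw [setIntegral_const, measureReal_def] at hb
      have : (P (Iic τ2)).toReal • τ1 = τ1 * (P (Iic τ2)).toReal := by ring_nf
      linarith [hb, this.symm ▸ hb]
    · rw [if_neg h1]
      have hm1 : 0 < (P (Iic τ1)).toReal := ENNReal.toReal_pos h1 (measure_ne_top P _)
      rw [div_le_div_iff₀ hm1 hm2]
      set m1 := (P (Iic τ1)).toReal
      set m2 := (P (Iic τ2)).toReal
      set I1 := ∫ x in Iic τ1, x ∂P
      set I2 := ∫ x in Iic τ2, x ∂P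
      set J := ∫ x in Ioc τ1 τ2, x ∂P
      have hsplit : I2 = I1 + J := by
        rw [show I2 = ∫ x in Iic τ1 ∪ Ioc τ1 τ2, x ∂P by rw [Iic_union_Ioc_eq_Iic h12]]
        exact setIntegral_union (Iic_disjoint_Ioc le_rfl) measurableSet_Ioc
          hint.integrableOn hint.integrableOn
      have hmsplit : m2 = m1 + (P (Ioc τ1 τ2)).toReal := by
        have : P (Iic τ2) = P (Iic τ1) + P (Ioc τ1 τ2) := by
          rw [← measure_union (Iic_disjoint_Ioc le_rfl) measurableSet_Ioc,
            Iic_union_Ioc_eq_Iic h12]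
        rw [show m2 = (P (Iic τ2)).toReal from rfl, this,
          ENNReal.toReal_add (measure_ne_top P _) (measure_ne_top P _)]
      have hI1 : I1 ≤ τ1 * m1 := by
        have hb : ∫ x in Iic τ1, x ∂P ≤ ∫ _ in Iic τ1, τ1 ∂P :=
          setIntegral_mono_on hint.integrableOn (integrable_const τ1).integrableOn
            measurableSet_Iic (fun x hx => hx)
        rw [setIntegral_const, smul_eq_mul, measureReal_def] at hb
        linarith
      have hJ : τ1 * (P (Ioc τ1 τ2)).toReal ≤ J := by
        have hb : ∫ _ in Ioc τ1 τ2, τ1 ∂P ≤ ∫ x in Ioc τ1 τ2, x ∂P :=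
          setIntegral_mono_on (integrable_const τ1).integrableOn hint.integrableOn
            measurableSet_Ioc (fun x hx => le_of_lt hx.1)
        rw [setIntegral_const, smul_eq_mul, measureReal_def] at hb
        linarith
      have hp0 : 0 ≤ (P (Ioc τ1 τ2)).toReal := ENNReal.toReal_nonneg
      have h4 : τ1 * (P (Ioc τ1 τ2)).toReal * m1 ≤ J * m1 :=
        mul_le_mul_of_nonneg_right hJ hm1.le
      have h5 : I1 * (P (Ioc τ1 τ2)).toReal ≤ τ1 * m1 * (P (Ioc τ1 τ2)).toReal :=
        mul_le_mul_of_nonneg_right hI1 hp0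
      rw [hsplit, hmsplit]
      nlinarith [h4, h5]

open Set in
/-- the set of equilibrium thresholds `{τ ≥ s̲ : E[s|s≤τ] = τ − φd}` is
nonempty and has a greatest element. -/
theorem stmt10 (θl θu φd : ℝ) (P : Measure ℝ) [IsProbabilityMeasure P]
    (hlt : θl < θu) (hsupp : P (Set.Icc θl θu)ᶜ = 0) (hφ : 0 ≤ φd)
    (sl : ℝ) (hsl : sl = sInf {x : ℝ | P (Set.Iic x) ≠ 0}) :
    ∃ τbar, IsGreatest {τ : ℝ | sl ≤ τ ∧ condMean P τ = τ - φd} τbar := by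
  have hint : Integrable (fun x : ℝ => x) P := condMean_aux_int θl θu P hsupp
  have hmono : Monotone (condMean P) := condMean_mono θl θu P hsupp
  have hae : ∀ᵐ x ∂P, x ∈ Icc θl θu := ae_iff.mpr hsupp
  have hPIcc : P (Icc θl θu) = 1 := by
    have h := prob_compl_eq_zero_iff (μ := P) (s := Icc θl θu) measurableSet_Icc
    exact h.mp hsupp
  -- the set {x | P (Iic x) ≠ 0} is nonempty and bounded below by θl
  have hne : (θu : ℝ) ∈ {x : ℝ | P (Set.Iic x) ≠ 0} := by
    have : P (Icc θl θu) ≤ P (Iic θu) := measure_mono (fun x hx => hx.2)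
    simp only [Set.mem_setOf_eq]
    intro h0
    rw [h0] at this
    simp [hPIcc] at this
  have hbdl : BddBelow {x : ℝ | P (Set.Iic x) ≠ 0} := by
    refine ⟨θl, fun x hx => ?_⟩
    by_contra hlt'
    push_neg at hlt'
    have hsub : Iic x ⊆ (Icc θl θu)ᶜ := by
      intro y hy hy2
      simp only [mem_Iic] at hy
      exact absurd hy2.1 (not_le.mpr (by linarith))
    exact hx (measure_mono_null hsub hsupp)
  -- P (Iio sl) = 0
  have hIio : P (Iio sl) = 0 := by
    have hcov : Iio sl ⊆ ⋃ n : ℕ, Iic (sl - 1 / (n + 1)) := by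
      intro x hx
      obtain ⟨n, hn⟩ := exists_nat_one_div_lt (show (0:ℝ) < sl - x by
        simpa using sub_pos.mpr (mem_Iio.mp hx))
      exact Set.mem_iUnion.mpr ⟨n, by simp only [mem_Iic]; linarith⟩
    refine measure_mono_null hcov (measure_iUnion_null fun n => ?_)
    by_contra h0
    have hmem : sl - 1 / (n + 1) ∈ {x : ℝ | P (Set.Iic x) ≠ 0} := h0
    have hle : sInf {x : ℝ | P (Set.Iic x) ≠ 0} ≤ sl - 1 / (n + 1) := csInf_le hbdl hmem
    rw [← hsl] at hle
    have hp : (0:ℝ) < 1 / (n + 1) := by positivity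
    linarith
  -- condMean at sl is ≥ sl
  have hslcm : sl ≤ condMean P sl := by
    unfold condMean
    by_cases h0 : P (Iic sl) = 0
    · rw [if_pos h0]
    · rw [if_neg h0]
      have hm : 0 < (P (Iic sl)).toReal := ENNReal.toReal_pos h0 (measure_ne_top P _)
      rw [le_div_iff₀ hm]
      have hae1 : ∀ᵐ x ∂(P.restrict (Iic sl)), sl ≤ x := by
        refine ae_restrict_of_ae ?_
        filter_upwards [measure_eq_zero_iff_ae_notMem.mp hIio] with x hx
        exact le_of_not_gt fun h => hx h
      have hb : ∫ _ in Iic sl, sl ∂P ≤ ∫ x in Iic sl, x ∂P :=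
        integral_mono_ae (integrable_const sl) hint.integrableOn hae1
      rw [setIntegral_const, smul_eq_mul, measureReal_def] at hb
      linarith
  -- condMean ≤ θu whenever P (Iic τ) ≠ 0
  have hcmle : ∀ τ : ℝ, P (Iic τ) ≠ 0 → condMean P τ ≤ θu := by
    intro τ h0
    unfold condMean
    rw [if_neg h0]
    have hm : 0 < (P (Iic τ)).toReal := ENNReal.toReal_pos h0 (measure_ne_top P _)
    rw [div_le_iff₀ hm]
    have hae1 : ∀ᵐ x ∂(P.restrict (Iic τ)), x ≤ θu :=
      ae_restrict_of_ae (hae.mono fun x hx => hx.2)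
    have hb : ∫ x in Iic τ, x ∂P ≤ ∫ _ in Iic τ, θu ∂P :=
      integral_mono_ae hint.integrableOn (integrable_const θu) hae1
    rw [setIntegral_const, smul_eq_mul, measureReal_def] at hb
    linarith
  -- the auxiliary set T
  set T := {τ : ℝ | sl ≤ τ ∧ τ - φd ≤ condMean P τ} with hTdef
  have hslT : sl ∈ T := ⟨le_rfl, by linarith⟩
  have hbddT : BddAbove T := by
    refine ⟨max sl (θu + φd), fun τ hτ => ?_⟩
    by_contra hgt
    push_neg at hgt
    have hτθu : θu ≤ τ := by
      have := le_max_right sl (θu + φd); linarith [lt_of_le_of_lt (le_max_right sl (θu + φd)) hgt]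
    have h0 : P (Iic τ) ≠ 0 := by
      intro h0
      have : P (Icc θl θu) ≤ P (Iic τ) := measure_mono (fun x hx => le_trans hx.2 hτθu)
      rw [h0] at this
      simp [hPIcc] at this
    have h1 := hcmle τ h0
    have h2 := hτ.2
    have h3 : θu + φd < τ := lt_of_le_of_lt (le_max_right sl (θu + φd)) hgt
    linarith
  set τb := sSup T with hτb
  have hub : ∀ τ ∈ T, τ ≤ τb := fun τ hτ => le_csSup hbddT hτ
  have hslτb : sl ≤ τb := hub sl hslT
  have h1 : τb - φd ≤ condMean P τb := by
    by_contra h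
    push_neg at h
    obtain ⟨τ, hτT, hτgt⟩ := exists_lt_of_lt_csSup ⟨sl, hslT⟩
      (show τb - (τb - φd - condMean P τb) < τb by linarith)
    have hmle : condMean P τ ≤ condMean P τb := hmono (hub τ hτT)
    have := hτT.2
    linarith
  have h2 : condMean P τb ≤ τb - φd := by
    by_contra h
    push_neg at h
    have hδ : 0 < condMean P τb - (τb - φd) := by linarith
    have hmem : τb + (condMean P τb - (τb - φd)) ∈ T := by
      refine ⟨by linarith, ?_⟩
      have := hmono (show τb ≤ τb + (condMean P τb - (τb - φd)) by linarith)
      linarith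
    have := hub _ hmem
    linarith
  refine ⟨τb, ⟨hslτb, le_antisymm h2 h1⟩, ?_⟩
  intro τ hτ
  exact hub τ ⟨hτ.1, hτ.2.ge⟩
end

section
/- Let G be a CDF on [θ̲, θ̄] with mean μ, let φ_d ∈ [0, θ̄ − μ], and suppose τ satisfies: τ − φ_d = E_G[s | s ≤ τ] and τ' − φ_d ≥ E_G[s | s ≤ τ'] for all τ' > τ. Suppose also G(s) = G(μ + φ_d) for all s ∈ [μ + φ_d, θ̄). If the testing fee is φ_t = ∫_{μ+φ_d}^{θ̄} (s − (μ+φ_d)) dG(s), then the total revenue φ_t + φ_d(1 − G(τ)) equals ∫_{τ}^{μ+φ_d} G(s) ds. -/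
open MeasureTheory

lemma int_max_aux (θl θu c : ℝ) (P : Measure ℝ) [IsProbabilityMeasure P]
    (hsupp : P (Set.Icc θl θu)ᶜ = 0) :
    Integrable (fun x => max (c - x) 0) P := by
  have hae : ∀ᵐ x ∂P, x ∈ Set.Icc θl θu := by
    have := measure_eq_zero_iff_ae_notMem.mp hsupp
    simpa using this
  have hmeas : Measurable fun x : ℝ => max (c - x) 0 :=
    (measurable_const.sub measurable_id).max measurable_const
  apply Integrable.mono' (integrable_const (max (c - θl) 0)) hmeas.aestronglyMeasurable
  filter_upwards [hae] with x hx
  rw [Real.norm_eq_abs, abs_of_nonneg (le_max_right _ _)]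
  exact max_le_max (by linarith [hx.1]) le_rfl

lemma key_layer (θl θu c : ℝ) (P : Measure ℝ) [IsProbabilityMeasure P]
    (hsupp : P (Set.Icc θl θu)ᶜ = 0) (hc : θl ≤ c) :
    ∫ x, max (c - x) 0 ∂P = ∫ s in θl..c, (P (Set.Iic s)).toReal := by
  have hae : ∀ᵐ x ∂P, x ∈ Set.Icc θl θu := by
    have := measure_eq_zero_iff_ae_notMem.mp hsupp
    simpa using this
  have hb : ∀ x ∈ Set.Icc θl θu, max (c - x) 0 ≤ max (c - θl) 0 := by
    intro x hx
    exact max_le_max (by linarith [hx.1]) le_rfl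
  have f_int : Integrable (fun x => max (c - x) 0) P := int_max_aux θl θu c P hsupp
  have f_nn : 0 ≤ᵐ[P] fun x => max (c - x) 0 := ae_of_all _ fun x => le_max_right _ _
  have f_bdd : (fun x => max (c - x) 0) ≤ᵐ[P] fun _ => max (c - θl) 0 := by
    filter_upwards [hae] with x hx; exact hb x hx
  rw [f_int.integral_eq_integral_Ioc_meas_le f_nn f_bdd]
  rw [show max (c - θl) 0 = c - θl from max_eq_left (by linarith)]
  have hset : Set.EqOn (fun t => (P {a | t ≤ max (c - a) 0}).toReal)
      (fun t => (P (Set.Iic (c - t))).toReal) (Set.Ioc (0:ℝ) (c - θl)) := by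
    intro t ht
    simp only
    have hseteq : {a : ℝ | t ≤ max (c - a) 0} = Set.Iic (c - t) := by
      ext a
      simp only [Set.mem_setOf_eq, Set.mem_Iic, le_max_iff]
      constructor
      · rintro (h | h)
        · linarith
        · linarith [ht.1]
      · intro h; left; linarith
    rw [hseteq]
  rw [setIntegral_congr_fun measurableSet_Ioc (f := fun t => P.real {a | t ≤ max (c - a) 0}) hset]
  rw [← intervalIntegral.integral_of_le (by linarith : (0:ℝ) ≤ c - θl)]
  rw [intervalIntegral.integral_comp_sub_left (fun s => (P (Set.Iic s)).toReal) c]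
  norm_num

/-- revenue identity `φt + φd (1 − G(τ)) = ∫_τ^{μ+φd} G(s) ds`
for the testing fee `φt = ∫_{μ+φd}^{θ̄} (s − (μ+φd)) dG(s)`, when `τ` is a
weak-highest equilibrium threshold and `G` is flat on `[μ+φd, θ̄)`. -/
theorem stmt12 (θl θu μ φd τ : ℝ) (P : Measure ℝ) [IsProbabilityMeasure P]
    (hlt : θl < θu) (hsupp : P (Set.Icc θl θu)ᶜ = 0) (hmean : ∫ x, x ∂P = μ)
    (hφ : φd ∈ Set.Icc 0 (θu - μ))
    (hτlb : θl ≤ τ)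
    (hτ1 : condMean P τ = τ - φd)
    (hτ2 : ∀ τ', τ < τ' → condMean P τ' ≤ τ' - φd)
    (hflat : ∀ s ∈ Set.Ico (μ + φd) θu,
      (P (Set.Iic s)).toReal = (P (Set.Iic (μ + φd))).toReal) :
    (∫ x in Set.Ioc (μ + φd) θu, (x - (μ + φd)) ∂P)
        + φd * (1 - (P (Set.Iic τ)).toReal)
      = ∫ s in τ..(μ + φd), (P (Set.Iic s)).toReal := by
  obtain ⟨hφ0, hφu⟩ := hφ
  have haθu : μ + φd ≤ θu := by linarith
  have hae : ∀ᵐ x ∂P, x ∈ Set.Icc θl θu := by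
    have := measure_eq_zero_iff_ae_notMem.mp hsupp
    simpa using this
  have hmonoG : Monotone fun s : ℝ => (P (Set.Iic s)).toReal := fun s t hst =>
    ENNReal.toReal_mono (measure_ne_top P _) (measure_mono (Set.Iic_subset_Iic.2 hst))
  have hGint : ∀ b c : ℝ, IntervalIntegrable (fun s => (P (Set.Iic s)).toReal) volume b c :=
    fun b c => hmonoG.intervalIntegrable
  have hid_int : Integrable (fun x : ℝ => x) P := by
    apply Integrable.mono' (integrable_const (max |θl| |θu|)) aestronglyMeasurable_id
    filter_upwards [hae] with x hx
    rw [Real.norm_eq_abs]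
    exact abs_le_max_abs_abs hx.1 hx.2
  have hPIoiθu : P (Set.Ioi θu) = 0 := by
    apply measure_mono_null _ hsupp
    intro x hx
    simp only [Set.mem_compl_iff, Set.mem_Icc, not_and, not_le]
    intro _
    exact hx
  -- flat implies Ioo (μ+φd) θu is null
  have hflatnull : P (Set.Ioo (μ + φd) θu) = 0 := by
    rcases eq_or_lt_of_le haθu with h | h
    · rw [← h]; simp
    · have hcov : Set.Ioo (μ + φd) θu ⊆
          ⋃ n : ℕ, (Set.Iic (θu - (θu - (μ + φd))/(n+1)) \ Set.Iic (μ + φd)) := by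
        intro x hx
        obtain ⟨hx1, hx2⟩ := hx
        obtain ⟨n, hn⟩ := exists_nat_gt ((θu - (μ + φd))/(θu - x))
        refine Set.mem_iUnion.2 ⟨n, ?_, ?_⟩
        · simp only [Set.mem_Iic]
          have h1 : (0:ℝ) < θu - x := by linarith
          have h2 : θu - (μ + φd) < ((n:ℝ)) * (θu - x) := (div_lt_iff₀ h1).mp hn
          have h3 : ((n:ℝ)) * (θu - x) ≤ ((n:ℝ) + 1) * (θu - x) := by nlinarith
          have h4 : (θu - (μ + φd))/((n:ℝ)+1) < θu - x :=
            (div_lt_iff₀ (by positivity)).mpr (by linarith)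
          linarith
        · simp only [Set.mem_Iic, not_le]; exact hx1
      refine measure_mono_null hcov (measure_iUnion_null fun n => ?_)
      have hd1 : (θu - (μ + φd))/((n:ℝ)+1) ≤ θu - (μ + φd) :=
        div_le_self (by linarith) (by linarith [Nat.cast_nonneg (α := ℝ) n])
      have hd2 : (0:ℝ) < (θu - (μ + φd))/((n:ℝ)+1) :=
        div_pos (by linarith) (by positivity)
      have hsn : (θu - (θu - (μ + φd))/((n:ℝ)+1)) ∈ Set.Ico (μ + φd) θu :=
        ⟨by linarith, by linarith⟩
      have heq : P (Set.Iic (θu - (θu - (μ + φd))/((n:ℝ)+1))) = P (Set.Iic (μ + φd)) :=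
        (ENNReal.toReal_eq_toReal_iff' (measure_ne_top P _) (measure_ne_top P _)).mp (hflat _ hsn)
      rw [measure_diff (Set.Iic_subset_Iic.2 hsn.1) measurableSet_Iic.nullMeasurableSet
        (measure_ne_top P _), heq, tsub_self]
  -- testing fee
  have hφt : ∫ x in Set.Ioc (μ + φd) θu, (x - (μ + φd)) ∂P
      = (θu - (μ + φd)) * (1 - (P (Set.Iic (μ + φd))).toReal) := by
    have hIocae : ∀ᵐ x ∂P, x ∈ Set.Ioc (μ + φd) θu → x - (μ + φd) = θu - (μ + φd) := by
      filter_upwards [measure_eq_zero_iff_ae_notMem.mp hflatnull] with x hx hmem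
      have : x = θu := by
        rcases eq_or_lt_of_le hmem.2 with h | h
        · exact h
        · exact absurd ⟨hmem.1, h⟩ hx
      rw [this]
    rw [setIntegral_congr_ae measurableSet_Ioc hIocae, setIntegral_const]
    have h1 : P (Set.Ioi (μ + φd)) = P (Set.Ioc (μ + φd) θu) := by
      apply le_antisymm
      · calc P (Set.Ioi (μ + φd)) = P (Set.Ioc (μ + φd) θu ∪ Set.Ioi θu) := by
              rw [Set.Ioc_union_Ioi_eq_Ioi haθu]
          _ ≤ P (Set.Ioc (μ + φd) θu) + P (Set.Ioi θu) := measure_union_le _ _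
          _ = P (Set.Ioc (μ + φd) θu) := by rw [hPIoiθu, add_zero]
      · exact measure_mono Set.Ioc_subset_Ioi_self
    have h2 : (P (Set.Iic (μ + φd))).toReal + (P (Set.Ioi (μ + φd))).toReal = 1 := by
      have h3 := measure_add_measure_compl (measurableSet_Iic : MeasurableSet (Set.Iic (μ + φd))) (μ := P)
      rw [Set.compl_Iic] at h3
      have h4 := congrArg ENNReal.toReal h3
      rw [ENNReal.toReal_add (measure_ne_top P _) (measure_ne_top P _)] at h4
      simpa using h4
    rw [measureReal_def, ← h1]
    rw [smul_eq_mul]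
    nlinarith [h2]
  -- mean identity
  have hmean2 : ∫ s in θl..θu, (P (Set.Iic s)).toReal = θu - μ := by
    have hk := key_layer θl θu θu P hsupp (le_of_lt hlt)
    have hcg : ∫ x, max (θu - x) 0 ∂P = ∫ x, (θu - x) ∂P := by
      apply integral_congr_ae
      filter_upwards [hae] with x hx
      exact max_eq_left (by linarith [hx.2])
    rw [hcg, integral_sub (integrable_const θu) hid_int, hmean, integral_const] at hk
    simp only [measureReal_def, measure_univ, ENNReal.toReal_one, smul_eq_mul, one_mul] at hk
    exact hk.symm
  -- equilibrium identity
  have hτid : ∫ s in θl..τ, (P (Set.Iic s)).toReal = φd * (P (Set.Iic τ)).toReal := by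
    have hk := key_layer θl θu τ P hsupp hτlb
    by_cases h0 : P (Set.Iic τ) = 0
    · have hφd0 : φd = 0 := by
        have h := hτ1
        unfold condMean at h
        rw [if_pos h0] at h
        linarith
      have hzz : Set.EqOn (fun s => (P (Set.Iic s)).toReal) (fun _ => (0:ℝ)) (Set.uIcc θl τ) := by
        intro s hs
        have hsτ : s ≤ τ := by
          rw [Set.uIcc_of_le hτlb] at hs; exact hs.2
        have : P (Set.Iic s) = 0 := measure_mono_null (Set.Iic_subset_Iic.2 hsτ) h0
        simp [this]
      rw [intervalIntegral.integral_congr hzz]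
      simp [hφd0]
    · have hGτ0 : (P (Set.Iic τ)).toReal ≠ 0 := by
        simp [ENNReal.toReal_eq_zero_iff, h0, measure_ne_top]
      have hm : ∫ x in Set.Iic τ, x ∂P = (τ - φd) * (P (Set.Iic τ)).toReal := by
        have h := hτ1
        unfold condMean at h
        rw [if_neg h0] at h
        exact (div_eq_iff hGτ0).mp h
      have hI := int_max_aux θl θu τ P hsupp
      have hsplit := integral_add_compl (measurableSet_Iic : MeasurableSet (Set.Iic τ)) hI
      rw [Set.compl_Iic] at hsplit
      have hzero : ∫ x in Set.Ioi τ, max (τ - x) 0 ∂P = 0 := by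
        rw [setIntegral_congr_fun measurableSet_Ioi
          (fun x hx => max_eq_right (by linarith [Set.mem_Ioi.mp hx] : τ - x ≤ 0))]
        simp
      have hfirst : ∫ x in Set.Iic τ, max (τ - x) 0 ∂P = ∫ x in Set.Iic τ, (τ - x) ∂P :=
        setIntegral_congr_fun measurableSet_Iic
          (fun x hx => max_eq_left (by linarith [Set.mem_Iic.mp hx] : (0:ℝ) ≤ τ - x))
      have hIic : ∫ x in Set.Iic τ, (τ - x) ∂P
          = τ * (P (Set.Iic τ)).toReal - (τ - φd) * (P (Set.Iic τ)).toReal := by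
        rw [integral_sub (integrable_const τ) hid_int.restrict, setIntegral_const, hm,
          smul_eq_mul, measureReal_def]
        ring
      rw [hfirst, hzero, add_zero, hIic] at hsplit
      rw [← hk, ← hsplit]
      ring
  -- flat interval integral
  have hflatint : ∫ s in (μ + φd)..θu, (P (Set.Iic s)).toReal
      = (θu - (μ + φd)) * (P (Set.Iic (μ + φd))).toReal := by
    have hcong : ∀ᵐ x ∂(volume : Measure ℝ), x ∈ Set.uIoc (μ + φd) θu →
        (P (Set.Iic x)).toReal = (P (Set.Iic (μ + φd))).toReal := by
      filter_upwards [measure_eq_zero_iff_ae_notMem.mp (measure_singleton θu : volume {θu} = 0)]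
        with x hx hmem
      rw [Set.uIoc_of_le haθu] at hmem
      have hxne : x ≠ θu := by simpa using hx
      exact hflat x ⟨le_of_lt hmem.1, lt_of_le_of_ne hmem.2 hxne⟩
    rw [intervalIntegral.integral_congr_ae hcong, intervalIntegral.integral_const, smul_eq_mul]
  -- combine
  have e1 := intervalIntegral.integral_interval_sub_left (hGint θl (μ + φd)) (hGint θl τ)
  have e2 := intervalIntegral.integral_interval_sub_left (hGint θl θu) (hGint θl (μ + φd))
  rw [hφt, ← e1, hτid]
  rw [hmean2, hflatint] at e2
  nlinarith [e2]
end

section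
/- Let θ̲ < μ < θ̄, and let G be a CDF on [θ̲, θ̄] with mean μ. Let φ_d ∈ (0, θ̄ − μ], and suppose: (i) G(s) = G(μ+φ_d) for all s ∈ [μ+φ_d, θ̄); (ii) there exists τ ≥ θ̲ + φ_d with φ_d G(τ) = ∫_{θ̲}^{τ} G(s) ds and φ_d G(τ') ≤ ∫_{θ̲}^{τ'} G(s) ds for all τ' > τ. Then the revenue R = (1 − G(μ+φ_d))(θ̄ − (μ+φ_d)) + φ_d(1 − G(τ)) satisfies R ≤ (θ̄ − μ)(1 − e^{(θ̲−μ)/(θ̄−μ)}). -/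
open MeasureTheory Set

lemma stmt13_alg {D φ g t c r : ℝ} (hφ0 : 0 < φ) (hφ : φ ≤ D)
    (hg0 : 0 < g) (hr : 0 ≤ r) (ht : t = g * Real.exp c)
    (hkey : D * (1 - g) - g * (r * D) ≤ g * φ * c) :
    D * Real.exp (-r) ≤ g * (D - φ) + φ * t := by
  have hEX : Real.exp c = Real.exp (-r) * Real.exp (c + r) := by
    rw [← Real.exp_add]; ring_nf
  have hX : 1 + (c + r) ≤ Real.exp (c + r) := by
    have := Real.add_one_le_exp (c + r); linarith
  have hr2 : 1 + r ≤ Real.exp r := by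
    have := Real.add_one_le_exp r; linarith
  have hE1 : Real.exp (-r) * Real.exp r = 1 := by rw [← Real.exp_add]; simp
  have hE0 : 0 < Real.exp (-r) := Real.exp_pos _
  have h6 : Real.exp (-r) * (1 + r) ≤ 1 := by nlinarith
  subst ht
  rw [hEX]
  nlinarith [mul_nonneg (mul_nonneg (mul_nonneg hφ0.le hg0.le) hE0.le)
      (by linarith : (0:ℝ) ≤ Real.exp (c + r) - (1 + (c + r))),
    mul_nonneg hE0.le (by linarith : (0:ℝ) ≤ g * φ * c - (D * (1 - g) - g * (r * D))),
    mul_nonneg (mul_nonneg hg0.le (by linarith : (0:ℝ) ≤ D - φ))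
      (by linarith : (0:ℝ) ≤ 1 - Real.exp (-r) * (1 + r))]

lemma stmt13_area (θl θu μ : ℝ) (P : Measure ℝ) [IsProbabilityMeasure P]
    (h1 : θl < μ) (h2 : μ < θu)
    (hsupp : P (Set.Icc θl θu)ᶜ = 0) (hmean : ∫ x, x ∂P = μ) :
    ∫ s in θl..θu, (P (Set.Iic s)).toReal = θu - μ := by
  have hT0 : (0:ℝ) < θu - θl := by linarith
  have haeIcc : ∀ᵐ x ∂P, x ∈ Set.Icc θl θu := by
    rw [ae_iff]; simpa [Set.compl_def] using hsupp
  have hxint : Integrable (fun x : ℝ => x) P := by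
    refine Integrable.mono' (integrable_const (max |θl| |θu|))
      measurable_id.aestronglyMeasurable ?_
    filter_upwards [haeIcc] with x hx
    rw [Real.norm_eq_abs]
    exact abs_le_max_abs_abs hx.1 hx.2
  have hfint : Integrable (fun x : ℝ => x - θl) P := hxint.sub (integrable_const θl)
  have hfnn : 0 ≤ᵐ[P] fun x : ℝ => x - θl := by
    filter_upwards [haeIcc] with x hx
    simp only [Pi.zero_apply]
    linarith [hx.1]
  have hfmean : ∫ x, (x - θl) ∂P = μ - θl := by
    rw [integral_sub hxint (integrable_const θl), hmean, integral_const]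
    simp
  have hlayer := hfint.integral_eq_integral_meas_lt hfnn
  have hset : ∀ t : ℝ, {a : ℝ | t < a - θl} = Set.Ioi (θl + t) := by
    intro t; ext x; simp [Set.mem_Ioi, lt_sub_iff_add_lt']
  simp only [hset] at hlayer
  have hHzero : ∀ t : ℝ, θu - θl ≤ t → (P (Set.Ioi (θl + t))).toReal = 0 := by
    intro t htt
    have h0 : P (Set.Ioi (θl + t)) = 0 := by
      refine measure_mono_null ?_ hsupp
      intro x hx
      simp only [Set.mem_compl_iff, Set.mem_Icc, not_and, not_le]
      intro _
      have : θu ≤ θl + t := by linarith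
      exact lt_of_le_of_lt this hx
    simp [h0]
  have hsplit : ∫ t in Set.Ioi (0:ℝ), (P (Set.Ioi (θl + t))).toReal
      = ∫ t in Set.Ioc (0:ℝ) (θu - θl), (P (Set.Ioi (θl + t))).toReal := by
    rw [← Set.Ioc_union_Ioi_eq_Ioi hT0.le]
    exact integral_union_eq_left_of_forall measurableSet_Ioi (fun x hx => hHzero x hx.le)
  simp only [measureReal_def] at hlayer
  rw [hsplit, ← intervalIntegral.integral_of_le hT0.le] at hlayer
  have hcomp : ∫ t in (0:ℝ)..(θu - θl), (P (Set.Ioi (θl + t))).toReal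
      = ∫ s in θl..θu, (P (Set.Ioi s)).toReal := by
    have := intervalIntegral.integral_comp_add_left (a := (0:ℝ)) (b := θu - θl)
      (fun s => (P (Set.Ioi s)).toReal) θl
    simpa using this
  rw [hcomp] at hlayer
  have hIoiG : ∀ s : ℝ, (P (Set.Ioi s)).toReal = 1 - (P (Set.Iic s)).toReal := by
    intro s
    have h := measure_compl (s := Set.Iic s) measurableSet_Iic (measure_ne_top P _)
    rw [Set.compl_Iic] at h
    rw [h, measure_univ, ENNReal.toReal_sub_of_le prob_le_one (by simp)]
    simp
  simp only [hIoiG] at hlayer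
  have hmonoG : Monotone (fun s : ℝ => (P (Set.Iic s)).toReal) := by
    intro a b hab
    exact ENNReal.toReal_mono (measure_ne_top _ _) (measure_mono (Set.Iic_subset_Iic.mpr hab))
  have hGint : IntervalIntegrable (fun s : ℝ => (P (Set.Iic s)).toReal) volume θl θu :=
    hmonoG.intervalIntegrable
  rw [intervalIntegral.integral_sub intervalIntegrable_const hGint] at hlayer
  simp only [intervalIntegral.integral_const, smul_eq_mul, mul_one] at hlayer
  linarith [hfmean.symm.trans hlayer]

set_option maxHeartbeats 2000000 in
/-- tight upper bound on the intermediary's robust revenue: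
`R ≤ (θ̄ − μ)(1 − e^{(θ̲−μ)/(θ̄−μ)})`. -/
theorem stmt13 (θl θu μ φd τ : ℝ) (P : Measure ℝ) [IsProbabilityMeasure P]
    (h1 : θl < μ) (h2 : μ < θu)
    (hsupp : P (Set.Icc θl θu)ᶜ = 0) (hmean : ∫ x, x ∂P = μ)
    (hφ0 : 0 < φd) (hφ : φd ≤ θu - μ)
    (hflat : ∀ s ∈ Set.Ico (μ + φd) θu,
      (P (Set.Iic s)).toReal = (P (Set.Iic (μ + φd))).toReal)
    (hτlb : θl + φd ≤ τ)
    (heq : φd * (P (Set.Iic τ)).toReal = ∫ s in θl..τ, (P (Set.Iic s)).toReal)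
    (hineq : ∀ τ', τ < τ' →
      φd * (P (Set.Iic τ')).toReal ≤ ∫ s in θl..τ', (P (Set.Iic s)).toReal) :
    (1 - (P (Set.Iic (μ + φd))).toReal) * (θu - (μ + φd))
        + φd * (1 - (P (Set.Iic τ)).toReal)
      ≤ (θu - μ) * (1 - Real.exp ((θl - μ) / (θu - μ))) := by
  set G : ℝ → ℝ := fun s => (P (Set.Iic s)).toReal with hGdef
  set A : ℝ → ℝ := fun x => ∫ s in θl..x, G s with hAdef
  set σ : ℝ := μ + φd with hσdef
  set D : ℝ := θu - μ with hDdef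
  set L : ℝ := μ - θl with hLdef
  have hD0 : 0 < D := by rw [hDdef]; linarith
  have hL0 : 0 < L := by rw [hLdef]; linarith
  have hσθu : σ ≤ θu := by rw [hσdef]; linarith
  have hmono : Monotone G := by
    intro a b hab
    exact ENNReal.toReal_mono (measure_ne_top _ _) (measure_mono (Set.Iic_subset_Iic.mpr hab))
  have hG0 : ∀ s, 0 ≤ G s := fun s => ENNReal.toReal_nonneg
  have hG1 : ∀ s, G s ≤ 1 := by
    intro s
    calc G s ≤ (P Set.univ).toReal :=
          ENNReal.toReal_mono (measure_ne_top _ _) (measure_mono (Set.subset_univ _))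
      _ = 1 := by simp
  have hGint : ∀ a b : ℝ, IntervalIntegrable G volume a b := fun a b =>
    hmono.intervalIntegrable
  have hA0 : ∀ x, θl ≤ x → 0 ≤ A x := fun x hx =>
    intervalIntegral.integral_nonneg hx (fun u _ => hG0 u)
  have hAcont : Continuous A := intervalIntegral.continuous_primitive hGint θl
  have hGcont : ∀ x, ContinuousWithinAt G (Set.Ici x) x := by
    have hGc : G = fun s => ProbabilityTheory.cdf P s := by
      funext s; rw [ProbabilityTheory.cdf_eq_real, measureReal_def]
    intro x
    rw [hGc]
    exact (ProbabilityTheory.cdf P).right_continuous x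
  have hτθl : θl < τ := by linarith
  have hAadd : ∀ a b : ℝ, A b = A a + ∫ s in a..b, G s := by
    intro a b
    have := intervalIntegral.integral_add_adjacent_intervals (hGint θl a) (hGint a b)
    rw [hAdef]
    simp only []
    linarith [this]
  -- Gronwall
  have hgron : ∀ b, τ ≤ b → A b ≤ A τ * Real.exp ((b - τ) / φd) := by
    intro b hb
    have key : ∀ x ∈ Set.Icc τ b, ‖A x‖ ≤ gronwallBound (A τ) (1/φd) 0 (x - τ) := by
      refine norm_le_gronwallBound_of_norm_deriv_right_le (f' := G)
        (hAcont.continuousOn) ?_ ?_ ?_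
      · intro x hx
        exact intervalIntegral.integral_hasDerivWithinAt_right (hGint θl x)
          (t := Set.Ioi x) (hmono.measurable.stronglyMeasurable).stronglyMeasurableAtFilter
          ((hGcont x).mono Set.Ioi_subset_Ici_self)
      · rw [Real.norm_eq_abs, abs_of_nonneg (hA0 τ hτθl.le)]
      · intro x hx
        have hx0 : θl ≤ x := le_trans hτθl.le hx.1
        rw [Real.norm_eq_abs, Real.norm_eq_abs, abs_of_nonneg (hG0 x),
          abs_of_nonneg (hA0 x hx0), add_zero]
        have hφG : φd * G x ≤ A x := by
          rcases eq_or_lt_of_le hx.1 with h | h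
          · rw [← h]; exact le_of_eq heq
          · exact hineq x h
        have hd : G x ≤ A x / φd := (le_div_iff₀ hφ0).mpr (by linarith [hφG])
        rw [one_div]
        simpa [div_eq_inv_mul] using hd
    have := key b ⟨hb, le_rfl⟩
    rw [gronwallBound_ε0, Real.norm_eq_abs, abs_of_nonneg (hA0 b (by linarith))] at this
    calc A b ≤ A τ * Real.exp (1/φd * (b - τ)) := this
      _ = A τ * Real.exp ((b - τ) / φd) := by rw [one_div_mul_eq_div]
  -- area identity
  have hArea : A θu = D := stmt13_area θl θu μ P h1 h2 hsupp hmean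
  -- flat integral
  have hane : ∀ᵐ x : ℝ, x ≠ θu := by
    rw [ae_iff]
    simp only [not_not, Set.setOf_eq_eq_singleton]
    exact Real.volume_singleton
  have hflatint : ∀ a b : ℝ, σ ≤ a → a ≤ b → b ≤ θu →
      (∫ s in a..b, G s) = G σ * (b - a) := by
    intro a b hσa hab hbθu
    have hcong : ∫ s in a..b, G s = ∫ s in a..b, G σ := by
      refine intervalIntegral.integral_congr_ae ?_
      filter_upwards [hane] with x hxne hx
      rw [Set.uIoc_of_le hab] at hx
      have hxθu : x < θu := lt_of_le_of_lt (le_of_le_of_eq le_rfl rfl) ?_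
      · exact hflat x ⟨le_trans hσa hx.1.le, hxθu⟩
      · exact lt_of_le_of_ne (le_trans hx.2 hbθu) hxne
    rw [hcong, intervalIntegral.integral_const, smul_eq_mul, mul_comm]
  -- A σ value
  have hAσ : A σ = D - G σ * (θu - σ) := by
    have h := hAadd σ θu
    rw [hflatint σ θu le_rfl hσθu le_rfl] at h
    linarith [hArea, h]
  have hθuσ : θu - σ = D - φd := by rw [hσdef, hDdef]; ring
  have hgoal : (1 - G σ) * (θu - σ) + φd * (1 - G τ)
      = D - (G σ * (D - φd) + φd * G τ) := by rw [hθuσ]; ring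
  have hRHSarg : (θl - μ) / (θu - μ) = -(L / D) := by
    rw [hLdef, hDdef]; ring
  have hRHS : (θu - μ) * (1 - Real.exp ((θl - μ) / (θu - μ)))
      = D - D * Real.exp (-(L/D)) := by
    rw [hRHSarg, ← hDdef]; ring
  rw [show (P (Set.Iic (μ + φd))).toReal = G σ from rfl,
    show (P (Set.Iic τ)).toReal = G τ from rfl] at *
  rw [hgoal, hRHS]
  have hsuff : D * Real.exp (-(L/D)) ≤ G σ * (D - φd) + φd * G τ → 
      D - (G σ * (D - φd) + φd * G τ) ≤ D - D * Real.exp (-(L/D)) := by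
    intro h; linarith
  apply hsuff
  -- heq as A
  have heqA : φd * G τ = A τ := heq
  -- case analysis
  have hexpD : Real.exp (-(L/D)) ≤ 1 := by
    rw [← Real.exp_zero]
    exact Real.exp_le_exp.mpr (by
      have : 0 ≤ L / D := div_nonneg hL0.le hD0.le
      linarith)
  have hIcc1 : P (Set.Icc θl θu) = 1 := by
    have h := measure_add_measure_compl (μ := P) (s := Set.Icc θl θu) measurableSet_Icc
    rw [hsupp, add_zero, measure_univ] at h
    exact h
  have hGtop : ∀ s : ℝ, θu ≤ s → G s = 1 := by
    intro s hs
    have hle : P (Set.Icc θl θu) ≤ P (Set.Iic s) :=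
      measure_mono (fun x hx => le_trans hx.2 hs)
    rw [hIcc1] at hle
    have : P (Set.Iic s) = 1 := le_antisymm prob_le_one hle
    rw [hGdef]; simp only []; rw [this]; simp
  rcases le_or_gt θu τ with hc1 | hc1
  · -- τ ≥ θu : t = 1, φd = D
    have ht1 : G τ = 1 := hGtop τ hc1
    have hint : (∫ s in θu..τ, G s) = τ - θu := by
      rw [intervalIntegral.integral_congr (g := fun _ => (1:ℝ))
        (fun x hx => hGtop x (by
          rw [Set.uIcc_of_le hc1] at hx
          exact hx.1))]
      simp
    have hAτ : A τ = D + (τ - θu) := by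
      have h := hAadd θu τ
      rw [hint, hArea] at h
      linarith
    have hφD : φd = D + (τ - θu) := by rw [← hAτ, ← heqA, ht1, mul_one]
    have : φd = D := by linarith [hφ, hφD, hc1, hDdef ▸ le_refl D]
    rw [ht1, this]
    nlinarith [hG0 σ, hD0, hexpD]
  rcases le_or_gt σ τ with hc2 | hc2
  · -- σ ≤ τ < θu : G τ = G σ
    have htg : G τ = G σ := hflat τ ⟨hc2, hc1⟩
    have hAτ : A τ = A σ + G σ * (τ - σ) := by
      have h := hAadd σ τ
      rw [hflatint σ τ le_rfl hc2 hc1.le] at h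
      exact h
    have hAσ' : A σ = D - G σ * (D - φd) := by rw [hAσ, hθuσ]
    have heq' : φd * G σ = A τ := by rw [← htg]; exact heqA
    have hkey2 : G σ * (D - φd) + φd * G τ = D + G σ * (τ - σ) := by
      rw [htg]
      linarith [heq', hAτ, hAσ']
    rw [hkey2]
    nlinarith [mul_nonneg (hG0 σ) (by linarith : (0:ℝ) ≤ τ - σ),
      mul_nonneg hD0.le (by linarith : (0:ℝ) ≤ 1 - Real.exp (-(L/D)))]
  · -- main case τ < σ
    have htg : G τ ≤ G σ := hmono hc2.le
    have hΔL : σ - τ ≤ L := by rw [hσdef, hLdef]; linarith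
    have hDφ : 0 ≤ D - φd := by rw [hDdef]; linarith
    have hAσlb : φd ≤ A σ := by
      rw [hAσ, hθuσ]
      nlinarith [hG1 σ, hG0 σ]
    have ht0 : 0 < G τ := by
      rcases lt_or_eq_of_le (hG0 τ) with h | h
      · exact h
      · exfalso
        have hAτ0 : A τ = 0 := by rw [← heqA, ← h, mul_zero]
        have := hgron σ hc2.le
        rw [hAτ0, zero_mul] at this
        linarith
    have hg0 : 0 < G σ := lt_of_lt_of_le ht0 htg
    have hgt1 : 1 ≤ G σ / G τ := (one_le_div ht0).mpr htg
    set sstar : ℝ := φd * Real.log (G σ / G τ) with hsstar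
    have hs0 : 0 ≤ sstar := mul_nonneg hφ0.le (Real.log_nonneg hgt1)
    have hexpstar : Real.exp (sstar / φd) = G σ / G τ := by
      rw [hsstar, mul_div_cancel_left₀ _ hφ0.ne']
      exact Real.exp_log (by positivity)
    have hAτt : A τ = φd * G τ := heqA.symm
    rcases le_or_gt (τ + sstar) σ with hπ | hπ
    · -- regular subcase
      have hgA : A (τ + sstar) ≤ φd * G σ := by
        have h := hgron (τ + sstar) (by linarith)
        rw [add_sub_cancel_left, hexpstar, hAτt] at h
        calc A (τ + sstar) ≤ φd * G τ * (G σ / G τ) := h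
          _ = φd * G σ := by field_simp
      have hint2 : (∫ s in (τ + sstar)..σ, G s) ≤ G σ * (σ - (τ + sstar)) := by
        calc (∫ s in (τ + sstar)..σ, G s) ≤ ∫ s in (τ + sstar)..σ, G σ :=
              intervalIntegral.integral_mono_on hπ (hGint _ _) intervalIntegrable_const
                (fun x hx => hmono hx.2)
          _ = G σ * (σ - (τ + sstar)) := by
              rw [intervalIntegral.integral_const, smul_eq_mul, mul_comm]
      have hchain : D - G σ * (D - φd) ≤ φd * G σ + G σ * (σ - τ) - G σ * sstar := by
        have h := hAadd (τ + sstar) σ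
        have hexpand : G σ * (σ - (τ + sstar)) = G σ * (σ - τ) - G σ * sstar := by ring
        rw [hAσ, hθuσ] at h
        linarith [hgA, hint2, hexpand ▸ hint2]
      have hkey3 : G σ * sstar ≤ G σ * L - D * (1 - G σ) := by
        have h1' : G σ * (σ - τ) ≤ G σ * L := mul_le_mul_of_nonneg_left hΔL hg0.le
        nlinarith [hchain]
      -- apply algebra lemma
      have hrD : (L / D) * D = L := div_mul_cancel₀ _ hD0.ne'
      have hcdef : G τ = G σ * Real.exp (Real.log (G τ / G σ)) := by
        rw [Real.exp_log (by positivity)]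
        field_simp
      have hclog : Real.log (G τ / G σ) = -Real.log (G σ / G τ) := by
        rw [← Real.log_inv, inv_div]
      have hkey4 : D * (1 - G σ) - G σ * ((L / D) * D) ≤
          G σ * φd * Real.log (G τ / G σ) := by
        rw [hrD, hclog]
        have h5 := hkey3
        rw [hsstar] at h5
        nlinarith [h5]
      have := stmt13_alg (D := D) (φ := φd) (g := G σ) (t := G τ)
        (c := Real.log (G τ / G σ)) (r := L / D) hφ0 (by rw [hDdef]; exact hφ) hg0
        (div_nonneg hL0.le hD0.le) hcdef hkey4
      linarith
    · -- impossible subcase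
      exfalso
      have h1' := hgron σ hc2.le
      have hlt : Real.exp ((σ - τ) / φd) < G σ / G τ := by
        rw [← hexpstar]
        exact Real.exp_lt_exp.mpr ((div_lt_div_iff_of_pos_right hφ0).mpr (by linarith))
      have h2' : A τ * Real.exp ((σ - τ) / φd) < A τ * (G σ / G τ) := by
        apply mul_lt_mul_of_pos_left hlt
        rw [hAτt]
        positivity
      have h3' : A τ * (G σ / G τ) = φd * G σ := by
        rw [hAτt]; field_simp
      have h4' : A σ < φd * G σ := by linarith
      rw [hAσ, hθuσ] at h4'
      nlinarith [hG1 σ, hD0]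
end

section
/- Let ε ≤ ε* := ((μ−θ̲)/(1+θ̄))², and let G be a CDF on [θ̲,θ̄] with mean μ and G(τ) ≥ 1 − √ε at τ = θ̲ + φ_d + √ε where φ_d ∈ [0, θ̄−μ]. Then τ − φ_d < E_G[s | s ≤ τ], i.e., θ̲ + √ε < θ̄ − (θ̄−μ)/(1−√ε) ≤ E_G[s | s ≤ τ]. -/
open MeasureTheory

/-- for `ε ≤ ((μ−θ̲)/(1+θ̄))²` and `G(τ) ≥ 1 − √ε` at
`τ = θ̲ + φd + √ε`, one has `θ̲ + √ε < θ̄ − (θ̄−μ)/(1−√ε) ≤ E[s | s ≤ τ]`, hence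
`τ − φd < E[s | s ≤ τ]`. -/
theorem stmt18 (θl θu μ φd ε : ℝ) (P : Measure ℝ) [IsProbabilityMeasure P]
    (h0 : 0 ≤ θl) (h1 : θl < μ) (h2 : μ < θu)
    (hsupp : P (Set.Icc θl θu)ᶜ = 0) (hmean : ∫ x, x ∂P = μ)
    (hε0 : 0 < ε) (hε : ε ≤ ((μ - θl) / (1 + θu)) ^ 2)
    (hφ : φd ∈ Set.Icc 0 (θu - μ))
    (hcdf : 1 - Real.sqrt ε ≤ (P (Set.Iic (θl + φd + Real.sqrt ε))).toReal) :
    θl + Real.sqrt ε < θu - (θu - μ) / (1 - Real.sqrt ε) ∧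
    θu - (θu - μ) / (1 - Real.sqrt ε)
      ≤ (∫ x in Set.Iic (θl + φd + Real.sqrt ε), x ∂P)
          / (P (Set.Iic (θl + φd + Real.sqrt ε))).toReal ∧
    (θl + φd + Real.sqrt ε) - φd
      < (∫ x in Set.Iic (θl + φd + Real.sqrt ε), x ∂P)
          / (P (Set.Iic (θl + φd + Real.sqrt ε))).toReal := by
  set r := Real.sqrt ε with hrdef
  have hr0 : 0 < r := Real.sqrt_pos.mpr hε0
  have h1u : (0:ℝ) < 1 + θu := by linarith
  have hrle : r ≤ (μ - θl) / (1 + θu) := by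
    have h := Real.sqrt_le_sqrt hε
    rwa [Real.sqrt_sq (div_nonneg (by linarith) (by linarith))] at h
  have hrlt : r < 1 := by
    have : (μ - θl) / (1 + θu) < 1 := (div_lt_one h1u).mpr (by linarith)
    linarith
  have hmul : r * (1 + θu) ≤ μ - θl := (le_div_iff₀ h1u).mp hrle
  set τ := θl + φd + r with hτdef
  set q := (P (Set.Iic τ)).toReal with hqdef
  have hq0 : 0 < q := lt_of_lt_of_le (by linarith) hcdf
  have hae : ∀ᵐ x ∂P, x ∈ Set.Icc θl θu := by
    rw [ae_iff]
    simpa [Set.compl_def] using hsupp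
  have hint : Integrable (fun x => x) P := by
    have hb : ∀ᵐ x ∂P, ‖(fun x => x) x‖ ≤ θu := by
      filter_upwards [hae] with x hx
      rw [Real.norm_eq_abs, abs_le]
      exact ⟨by linarith [hx.1], hx.2⟩
    exact (integrable_const θu).mono' measurable_id.aestronglyMeasurable hb
  have hms : MeasurableSet (Set.Iic τ) := measurableSet_Iic
  have hdecomp : (∫ x in Set.Iic τ, x ∂P) + (∫ x in (Set.Iic τ)ᶜ, x ∂P) = μ := by
    rw [← hmean]; exact integral_add_compl hms hint
  have hcb : (∫ x in (Set.Iic τ)ᶜ, x ∂P) ≤ θu * (P (Set.Iic τ)ᶜ).toReal := by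
    have h1 : ∀ᵐ x ∂(P.restrict (Set.Iic τ)ᶜ), x ≤ θu :=
      ae_restrict_of_ae (hae.mono fun x hx => hx.2)
    calc (∫ x in (Set.Iic τ)ᶜ, x ∂P) ≤ ∫ _x in (Set.Iic τ)ᶜ, θu ∂P :=
          integral_mono_ae hint.restrict (integrable_const θu) h1
      _ = θu * (P (Set.Iic τ)ᶜ).toReal := by
          simp [integral_const, Measure.restrict_apply_univ, smul_eq_mul, mul_comm, measureReal_def]
  have hcompl : (P (Set.Iic τ)ᶜ).toReal = 1 - q := by
    rw [prob_compl_eq_one_sub hms,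
      ENNReal.toReal_sub_of_le prob_le_one (by simp), ENNReal.toReal_one]
  have hI : μ - θu * (1 - q) ≤ (∫ x in Set.Iic τ, x ∂P) := by
    rw [hcompl] at hcb
    linarith
  set d := (θu - μ) / (1 - r) with hddef
  have hd : d * (1 - r) = θu - μ := div_mul_cancel₀ _ (by linarith : (1:ℝ) - r ≠ 0)
  have hdpos : 0 < d := div_pos (by linarith) (by linarith)
  have ha : θl + r < θu - d := by
    nlinarith [mul_nonneg h0 hr0.le, sq_nonneg r, mul_pos hr0 hr0]
  have hb : θu - d ≤ (∫ x in Set.Iic τ, x ∂P) / q := by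
    rw [le_div_iff₀ hq0]
    have hdq : d * (1 - r) ≤ d * q := mul_le_mul_of_nonneg_left hcdf hdpos.le
    nlinarith
  exact ⟨ha, hb, by linarith⟩
end

section
/- Fix 0 < p < 1/3 and a disclosure fee φ_d < 1/2. Consider the score distribution with P(s=0) = (1−p)/2, P(s=3/4) = 2p, P(s=1) = (1−3p)/2 (induced by θ uniform on {0,1} and the conditional distributions: given θ=0, s=0 w.p. 1−p and s=3/4 w.p. p; given θ=1, s=3/4 w.p. 3p and s=1 w.p. 1−3p). If 3/4 − φ_d > 3p/(1+3p), then the only threshold τ ∈ {0, 3/4, 1} satisfying the equilibrium condition E[s | s ≤ τ] = τ − φ_d with nondisclosure price E[s | s ≤ τ] is τ such that scores 3/4 and 1 are disclosed; in particular for φ_d slightly below 1/2 this holds iff p < 1/9. -/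
/-- the three-score test with marginal probabilities
`P(s=0) = (1−p)/2`, `P(s=3/4) = 2p`, `P(s=1) = (1−3p)/2`. If `3/4 − φd > 3p/(1+3p)`,
then: the nondisclosure price when scores `{0, 3/4}` conceal is `3p/(1+3p)`; the
threshold `τ = 3/4` is not an equilibrium threshold (`E[s|s≤3/4] ≠ 3/4 − φd`);
the threshold `τ = 1` is not an equilibrium threshold (`E[s|s≤1] ≠ 1 − φd`); the
full-disclosure-above-0 threshold `τ = 0` satisfies the equilibrium condition
`E[s|s≤0] ≥ 0 − φd`; and for `φd` at its limit `1/2` the condition holds iff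
`p < 1/9`. -/
theorem stmt19 (p φd : ℝ) (hp0 : 0 < p) (hp3 : p < 1 / 3)
    (hφ0 : 0 < φd) (hφ : φd < 1 / 2)
    (hcond : 3 / 4 - φd > 3 * p / (1 + 3 * p)) :
    ((2 * p) * (3 / 4) / ((1 - p) / 2 + 2 * p) = 3 * p / (1 + 3 * p)) ∧
    (3 * p / (1 + 3 * p) ≠ 3 / 4 - φd) ∧
    ((2 * p) * (3 / 4) + (1 - 3 * p) / 2 ≠ 1 - φd) ∧
    ((0 : ℝ) ≥ 0 - φd) ∧
    (3 / 4 - (1 / 2 : ℝ) > 3 * p / (1 + 3 * p) ↔ p < 1 / 9) := by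
  have h1 : (0:ℝ) < 1 + 3 * p := by linarith
  refine ⟨?_, ne_of_lt hcond, ?_, by linarith, ?_⟩
  · have h2 : (1 - p) / 2 + 2 * p ≠ 0 := by intro h; nlinarith
    rw [div_eq_div_iff h2 (ne_of_gt h1)]
    ring
  · have : (2 * p) * (3 / 4) + (1 - 3 * p) / 2 = 1 / 2 := by ring
    rw [this]; intro h; linarith
  · rw [gt_iff_lt, div_lt_iff₀ h1]
    constructor <;> intro h <;> nlinarith
end
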